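/- Let M be an mtt and t ∈ T_Δ a fixed output tree, with run, ρ, V, f defined from M and t as in the context. Let s_1,…,s_k ∈ T_Σ and a⃗ = (run(s_1),…,run(s_k)). Then for every tree r over Δ ∪ (Q × {x1,…,xk}) ∪ {y1,…,yn}, all trees t_1,…,t_n ∈ T_Δ, and v⃗ = (ρ(t_1),…,ρ(t_n)): { ρ(t'[y_1/t_1,…,y_n/t_n]) | t' ∈ ⟦r[x_1/s_1,…,x_k/s_k]⟧_IO } = { v' ∈ V | f_{v⃗,a⃗}(r, v') }. -/

import Mathlib

namespace MttF

/-- Finite ordered trees over a label type `α`. -/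
inductive RTree (α : Type) : Type
  | node : α → List (RTree α) → RTree α

namespace RTree

variable {α β : Type}

/-- The root label of a tree. -/
def label : RTree α → α
  | node a _ => a

/-- The list of immediate subtrees of a tree. -/
def children : RTree α → List (RTree α)
  | node _ ts => ts

/-- Relabelling of trees. -/
def map (f : α → β) : RTree α → RTree β
  | node a ts => node (f a) (ts.attach.map (fun x => map f x.1))
decreasing_by
  have := List.sizeOf_lt_of_mem x.2
  simp only [node.sizeOf_spec]
  omega

/-- A tree is well-formed with respect to a rank function if every node labeled
by a rank-`k` symbol has exactly `k` children. `T_Σ` is the set of well-formed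
trees over `Σ`. -/
inductive Wf (rk : α → ℕ) : RTree α → Prop
  | node {a : α} {ts : List (RTree α)} :
      ts.length = rk a → (∀ t ∈ ts, Wf rk t) → Wf rk (node a ts)

/-- `Subtree u t` holds iff `u` is a subtree of `t` (rooted at some node of `t`). -/
inductive Subtree : RTree α → RTree α → Prop
  | refl (t : RTree α) : Subtree t t
  | step {u c : RTree α} {a : α} {ts : List (RTree α)} :
      c ∈ ts → Subtree u c → Subtree u (node a ts)

end RTree

/-- Labels for output trees with parameters: trees over `Δ ∪ Y`. -/
inductive OLab (Δ : Type) : Type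
  | out (d : Δ)
  | param (i : ℕ)

/-- Labels for right-hand sides of mtt rules: trees over `Δ ∪ (Q × X) ∪ Y`
(the second component of a call is the index of the input variable `x`). -/
inductive RLab (Δ Q : Type) : Type
  | out (d : Δ)
  | call (q : Q) (x : ℕ)
  | param (i : ℕ)

/-- Labels for "semantic" trees over `Δ ∪ (Q × T_Σ) ∪ Y`. -/
inductive SLab (Γ Δ Q : Type) : Type
  | out (d : Δ)
  | call (q : Q) (s : RTree Γ)
  | param (i : ℕ)

/-- Trees over `Δ ∪ Y`. -/
abbrev OT (Δ : Type) := RTree (OLab Δ)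
/-- Right-hand side trees over `Δ ∪ (Q × X) ∪ Y`. -/
abbrev Rhs (Δ Q : Type) := RTree (RLab Δ Q)
/-- Trees over `Δ ∪ (Q × T_Σ) ∪ Y`. -/
abbrev ST (Γ Δ Q : Type) := RTree (SLab Γ Δ Q)

/-- First-order substitution `x_i := ss_i` on a label of a right-hand side
(indices are 0-based; for well-formed rules the index is always in range). -/
def RLab.subst {Γ Δ Q : Type} (ss : List (RTree Γ)) : RLab Δ Q → SLab Γ Δ Q
  | .out d => .out d
  | .param i => .param i
  | .call q x =>
    match ss[x]? with
    | some s => .call q s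
    | none => .param x

/-- `r[x_1/s_1, …, x_k/s_k]`. -/
def substX {Γ Δ Q : Type} (ss : List (RTree Γ)) (r : Rhs Δ Q) : ST Γ Δ Q :=
  r.map (RLab.subst ss)

/-- Second-order (parameter) substitution `t[y_1/ts_1, …, y_n/ts_n]`
(`y` indices are 0-based). -/
def substY {Δ : Type} (ts : List (OT Δ)) : OT Δ → OT Δ
  | .node (.param i) _ => ts.getD i (.node (.param i) [])
  | .node (.out d) us => .node (.out d) (us.attach.map (fun x => substY ts x.1))
decreasing_by
  have := List.sizeOf_lt_of_mem x.2
  simp only [RTree.node.sizeOf_spec]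
  omega

/-- The embedding of `T_Δ` into the trees over `Δ ∪ Y`. -/
def embed {Δ : Type} (t : RTree Δ) : OT Δ := t.map OLab.out

variable {Γ Δ Q : Type}

/-- IO (call-by-value, inside-out) semantics: `SemIO rsel u t` holds iff
`t ∈ ⟦u⟧_IO`.  The rules of the transducer are given by a selector
`rsel q σ ss`: the set of right-hand sides of the `⟨q,σ⟩`-rules that are
applicable when the children of the current input node are `ss` (for a plain
mtt this does not depend on `ss`, cf. `plainSel`). -/
inductive SemIO (rsel : Q → Γ → List (RTree Γ) → Set (Rhs Δ Q)) :
    ST Γ Δ Q → OT Δ → Prop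
  | param (i : ℕ) :
      SemIO rsel (.node (.param i) []) (.node (.param i) [])
  | out {d : Δ} {us : List (ST Γ Δ Q)} {ts : List (OT Δ)}
      (hlen : ts.length = us.length)
      (h : ∀ i : Fin us.length, SemIO rsel (us.get i) (ts.get (i.cast hlen.symm))) :
      SemIO rsel (.node (.out d) us) (.node (.out d) ts)
  | call {q : Q} {σ : Γ} {ss : List (RTree Γ)} {us : List (ST Γ Δ Q)}
      {r : Rhs Δ Q} {t₀ : OT Δ} {ts : List (OT Δ)}
      (hr : r ∈ rsel q σ ss)
      (h₀ : SemIO rsel (substX ss r) t₀)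
      (hlen : ts.length = us.length)
      (h : ∀ i : Fin us.length, SemIO rsel (us.get i) (ts.get (i.cast hlen.symm))) :
      SemIO rsel (.node (.call q (.node σ ss)) us) (substY ts t₀)

mutual
/-- OI (call-by-name, outside-in) semantics: `SemOI rsel u t` holds iff
`t ∈ ⟦u⟧_OI`. -/
inductive SemOI (rsel : Q → Γ → List (RTree Γ) → Set (Rhs Δ Q)) :
    ST Γ Δ Q → OT Δ → Prop
  | param (i : ℕ) :
      SemOI rsel (.node (.param i) []) (.node (.param i) [])
  | out {d : Δ} {us : List (ST Γ Δ Q)} {ts : List (OT Δ)}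
      (hlen : ts.length = us.length)
      (h : ∀ i : Fin us.length, SemOI rsel (us.get i) (ts.get (i.cast hlen.symm))) :
      SemOI rsel (.node (.out d) us) (.node (.out d) ts)
  | call {q : Q} {σ : Γ} {ss : List (RTree Γ)} {us : List (ST Γ Δ Q)}
      {r : Rhs Δ Q} {t₀ : OT Δ} {t : OT Δ}
      (hr : r ∈ rsel q σ ss)
      (h₀ : SemOI rsel (substX ss r) t₀)
      (hs : OISub rsel us t₀ t) :
      SemOI rsel (.node (.call q (.node σ ss)) us) t

/-- OI-substitution: `OISub rsel us t₀ t` holds iff `t ∈ (t₀ ←_OI (⟦us_1⟧_OI, …, ⟦us_n⟧_OI))`,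
i.e. `t` is obtained from `t₀` by independently replacing every occurrence of a parameter
`y_i` by some member of `⟦us_i⟧_OI`. -/
inductive OISub (rsel : Q → Γ → List (RTree Γ) → Set (Rhs Δ Q)) :
    List (ST Γ Δ Q) → OT Δ → OT Δ → Prop
  | param {us : List (ST Γ Δ Q)} {i : ℕ} {t : OT Δ}
      (h : i < us.length) (hsem : SemOI rsel (us.get ⟨i, h⟩) t) :
      OISub rsel us (.node (.param i) []) t
  | out {us : List (ST Γ Δ Q)} {d : Δ} {ts ts' : List (OT Δ)}
      (hlen : ts'.length = ts.length)
      (h : ∀ i : Fin ts.length, OISub rsel us (ts.get i) (ts'.get (i.cast hlen.symm))) :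
      OISub rsel us (.node (.out d) ts) (.node (.out d) ts')
end

/-- The rule selector of a plain mtt: the applicable rules do not depend on the
child subtrees of the current input node. -/
def plainSel (rules : Q → Γ → Set (Rhs Δ Q)) :
    Q → Γ → List (RTree Γ) → Set (Rhs Δ Q) :=
  fun q σ _ => rules q σ

/-- The translation `τ_{IO,M} ⊆ T_Σ × T_Δ` realized in IO mode. -/
def tauIO (rankΓ : Γ → ℕ) (rankΔ : Δ → ℕ)
    (rsel : Q → Γ → List (RTree Γ) → Set (Rhs Δ Q)) (q₀ : Q) :
    Set (RTree Γ × RTree Δ) :=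
  {p | p.1.Wf rankΓ ∧ p.2.Wf rankΔ ∧
       SemIO rsel (.node (.call q₀ p.1) []) (embed p.2)}

/-- The translation `τ_{OI,M} ⊆ T_Σ × T_Δ` realized in OI mode. -/
def tauOI (rankΓ : Γ → ℕ) (rankΔ : Δ → ℕ)
    (rsel : Q → Γ → List (RTree Γ) → Set (Rhs Δ Q)) (q₀ : Q) :
    Set (RTree Γ × RTree Δ) :=
  {p | p.1.Wf rankΓ ∧ p.2.Wf rankΔ ∧
       SemOI rsel (.node (.call q₀ p.1) []) (embed p.2)}

/-- Well-formedness of a right-hand side of a rule of an mtt whose current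
input symbol has rank `k` and whose current state has rank `m`: output symbols
have the correct number of children, state calls `⟨q', x_i⟩` have `rank q'`
children and `i < k`, and parameters `y_j` satisfy `j < m`. -/
inductive RhsWf (rankΔ : Δ → ℕ) (rankQ : Q → ℕ) (k m : ℕ) : Rhs Δ Q → Prop
  | out {d : Δ} {ts : List (Rhs Δ Q)}
      (hlen : ts.length = rankΔ d) (h : ∀ t ∈ ts, RhsWf rankΔ rankQ k m t) :
      RhsWf rankΔ rankQ k m (.node (.out d) ts)
  | call {q : Q} {x : ℕ} {ts : List (Rhs Δ Q)}
      (hx : x < k) (hlen : ts.length = rankQ q)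
      (h : ∀ t ∈ ts, RhsWf rankΔ rankQ k m t) :
      RhsWf rankΔ rankQ k m (.node (.call q x) ts)
  | param {i : ℕ} (hi : i < m) : RhsWf rankΔ rankQ k m (.node (.param i) [])

/-- Well-formedness of a tree over `Δ ∪ (Q × T_Σ) ∪ Y`. -/
inductive STWf (rankΓ : Γ → ℕ) (rankΔ : Δ → ℕ) (rankQ : Q → ℕ) : ST Γ Δ Q → Prop
  | out {d : Δ} {ts : List (ST Γ Δ Q)}
      (hlen : ts.length = rankΔ d) (h : ∀ t ∈ ts, STWf rankΓ rankΔ rankQ t) :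
      STWf rankΓ rankΔ rankQ (.node (.out d) ts)
  | call {q : Q} {s : RTree Γ} {ts : List (ST Γ Δ Q)}
      (hs : s.Wf rankΓ) (hlen : ts.length = rankQ q)
      (h : ∀ t ∈ ts, STWf rankΓ rankΔ rankQ t) :
      STWf rankΓ rankΔ rankQ (.node (.call q s) ts)
  | param (i : ℕ) : STWf rankΓ rankΔ rankQ (.node (.param i) [])

/-- A tree over `Δ ∪ (Q × T_Σ) ∪ Y` is parameter-free if no `y_i` occurs in it. -/
inductive NoParam : ST Γ Δ Q → Prop
  | node {l : SLab Γ Δ Q} {ts : List (ST Γ Δ Q)}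
      (hl : ∀ i : ℕ, l ≠ .param i) (h : ∀ t ∈ ts, NoParam t) :
      NoParam (.node l ts)

/-- A macro tree transducer `M = (Q, Σ, Δ, q₀, R)`.  The alphabets `Γ` (input),
`Δ` (output) and the set `Q` of states are ranked; `q₀` has rank `0`; `rules q σ`
is the (finite) set `R_{q,σ}` of right-hand sides of the `⟨q,σ⟩`-rules, and every
right-hand side is a well-formed tree over `Δ ∪ (Q × X_k) ∪ Y_m`. -/
structure MTT (Γ Δ Q : Type) where
  rankΓ : Γ → ℕ
  rankΔ : Δ → ℕ
  rankQ : Q → ℕ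
  q₀ : Q
  q₀_rank : rankQ q₀ = 0
  rules : Q → Γ → Set (Rhs Δ Q)
  rules_fin : ∀ q σ, (rules q σ).Finite
  rules_wf : ∀ q σ, ∀ r ∈ rules q σ, RhsWf rankΔ rankQ (rankΓ σ) (rankQ q) r

/-- The rule selector of a plain mtt. -/
def MTT.sel (M : MTT Γ Δ Q) : Q → Γ → List (RTree Γ) → Set (Rhs Δ Q) :=
  plainSel M.rules

end MttF
namespace MttF

/-- The set `V = V_t ∪ {⊥}`: `some w` stands for the subtree `w` of the fixed
output tree `t`, and `none` stands for `⊥`. -/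
abbrev V (Δ : Type) := Option (RTree Δ)

/-- Triples `(q, v⃗, v') ∈ ⋃_i Q^{(i)} × V^i × V`. -/
abbrev Trip (Δ Q : Type) := Q × List (V Δ) × V Δ

/-- `v` is a legitimate element of `V = V_t ∪ {⊥}` (for `some w`, `w` must be a
subtree of `t`). -/
def InV {Δ : Type} (t : RTree Δ) : V Δ → Prop
  | none => True
  | some w => RTree.Subtree w t

/-- `rhoRel t t' v` holds iff `ρ(t') = v`, where `ρ(t') = t'` if `t'` is a
subtree of `t` and `ρ(t') = ⊥` otherwise (here `t'` ranges over trees over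
`Δ ∪ Y`, and subtrees of `t` are compared via the embedding of `T_Δ`). -/
def rhoRel {Δ : Type} (t : RTree Δ) (t' : OT Δ) : V Δ → Prop
  | some w => RTree.Subtree w t ∧ embed w = t'
  | none => ¬ ∃ w : RTree Δ, RTree.Subtree w t ∧ embed w = t'

/-- `ρ(T)` for a set `T` of output trees. -/
def rhoImg {Δ : Type} (t : RTree Δ) (T : Set (OT Δ)) : Set (V Δ) :=
  {v | ∃ t' ∈ T, rhoRel t t' v}

/-- The predicate `f_{v⃗,a⃗}(r, v')` of the inverse-type construction for
IO-mtts, for the fixed output tree `t`. -/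
inductive FPred {Δ Q : Type} (t : RTree Δ) (vs : List (V Δ))
    (aenv : List (Set (Trip Δ Q))) : Rhs Δ Q → V Δ → Prop
  | param {i : ℕ} {v : V Δ} (h : vs[i]? = some v) :
      FPred t vs aenv (.node (.param i) []) v
  | outSome {d : Δ} {rs : List (Rhs Δ Q)} {w : RTree Δ}
      (hw : RTree.Subtree w t) (hl : w.label = d)
      (h : ∀ i : Fin rs.length, FPred t vs aenv (rs.get i) w.children[i.val]?) :
      FPred t vs aenv (.node (.out d) rs) (some w)
  | outNone {d : Δ} {rs : List (Rhs Δ Q)} (us : List (V Δ))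
      (hlen : us.length = rs.length)
      (hus : ∀ u ∈ us, InV t u)
      (h : ∀ i : Fin rs.length, FPred t vs aenv (rs.get i) (us.get (i.cast hlen.symm)))
      (hno : ¬ ∃ w : RTree Δ, RTree.Subtree w t ∧ w.label = d ∧
          ∀ i : Fin rs.length, w.children[i.val]? = us.get (i.cast hlen.symm)) :
      FPred t vs aenv (.node (.out d) rs) none
  | call {q' : Q} {x : ℕ} {rs : List (Rhs Δ Q)} {v : V Δ} (us : List (V Δ))
      (hlen : us.length = rs.length)
      (ha : (q', us, v) ∈ aenv.getD x ∅)
      (h : ∀ i : Fin rs.length, FPred t vs aenv (rs.get i) (us.get (i.cast hlen.symm))) :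
      FPred t vs aenv (.node (.call q' x) rs) v

/-- The run `run(s)` of the (on-the-fly constructed) inverse-type automaton of
an IO-mtt on the input tree `s`, for the fixed output tree `t`:
`run(σ(s_1,…,s_k)) = {(q, v⃗, v') | ∃ r ∈ R_{q,σ}: f_{v⃗,(run(s_1),…,run(s_k))}(r, v')}`. -/
def runIO {Γ Δ Q : Type} (rankQ : Q → ℕ)
    (rsel : Q → Γ → List (RTree Γ) → Set (Rhs Δ Q)) (t : RTree Δ) :
    RTree Γ → Set (Trip Δ Q)
  | .node σ ss =>
      {trip | trip.2.1.length = rankQ trip.1 ∧ (∀ v ∈ trip.2.1, InV t v) ∧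
        InV t trip.2.2 ∧
        ∃ r ∈ rsel trip.1 σ ss,
          FPred t trip.2.1 (ss.attach.map (fun x => runIO rankQ rsel t x.1)) r trip.2.2}
decreasing_by
  have := List.sizeOf_lt_of_mem x.2
  simp only [RTree.node.sizeOf_spec]
  omega

end MttF

namespace MttF

open Classical in
/-- The function `ρ : T_Δ → V`: `ρ(t') = t'` if `t'` is a subtree of `t`,
and `ρ(t') = ⊥` otherwise. -/
noncomputable def rhoFun {Δ : Type} (t : RTree Δ) (t' : RTree Δ) : V Δ :=
  if RTree.Subtree t' t then some t' else none

/-!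
`ρ` is compositional on output nodes: `ρ(δ(t₁, …, t_l))` is determined by `δ` and
`ρ(t₁), …, ρ(t_l)` (this is `rhoNode`), and this is exactly how `f` treats output symbols.
The claim is proved by induction on the input forest and, inside it, on `r`. For a call
`⟨q, x_j⟩(r₁, …, r_l)` the IO semantics evaluates the arguments first and substitutes their
results `t'_i` into a result of a rule body. Composed with the outer substitution of the `t_i`,
this is the rule body with its parameters bound to the `t'_i[y⃗/t⃗]`, so the induction
hypothesis for the children of `s_j` applies: only the values `ρ(t'_i[y⃗/t⃗])` matter, and
these are what a triple of `run(s_j)` records.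
-/

section ListLemmas

variable {α β γ : Type}

theorem forall₂_iff_forall_fin {R : α → β → Prop} {l₁ : List α} {l₂ : List β}
    (h : l₂.length = l₁.length) :
    List.Forall₂ R l₁ l₂ ↔ ∀ i : Fin l₁.length, R (l₁.get i) (l₂.get (i.cast h.symm)) :=
  List.forall₂_iff_get.trans
    ⟨fun H i => H.2 i.1 i.2 _, fun H => ⟨h.symm, fun i h₁ _ => H ⟨i, h₁⟩⟩⟩

theorem forall₂_congr_of_mem {R S : α → β → Prop} {l : List α} {u : List β}
    (h : ∀ a ∈ l, ∀ b, R a b ↔ S a b) : List.Forall₂ R l u ↔ List.Forall₂ S l u :=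
  ⟨fun H => ((List.forall₂_and_left l u).2 ⟨fun _ ha => ha, H⟩).imp
      fun a b hab => (h a hab.1 b).1 hab.2,
    fun H => ((List.forall₂_and_left l u).2 ⟨fun _ ha => ha, H⟩).imp
      fun a b hab => (h a hab.1 b).2 hab.2⟩

theorem map_eq_map_iff_forall₂ {f : α → γ} {g : β → γ} {l₁ : List α} {l₂ : List β} :
    l₁.map f = l₂.map g ↔ List.Forall₂ (fun a b => f a = g b) l₁ l₂ := by
  simp only [← List.forall₂_eq_eq_eq, List.forall₂_map_left_iff, List.forall₂_map_right_iff]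

theorem exists_forall₂_map_eq_iff {R : α → β → Prop} {f : β → γ}
    {as : List α} {cs : List γ} :
      (∃ bs, List.Forall₂ R as bs ∧ bs.map f = cs) ↔
        List.Forall₂ (fun a c => ∃ b, R a b ∧ f b = c) as cs := by
  induction as generalizing cs with
  | nil => simp [eq_comm]
  | cons a as ih =>
    simp only [List.forall₂_cons_left_iff, ← ih]
    constructor
    · rintro ⟨_, ⟨b, bs, hb, hbs, rfl⟩, rfl⟩
      exact ⟨f b, bs.map f, ⟨b, hb, rfl⟩, ⟨bs, hbs, rfl⟩, rfl⟩
    · rintro ⟨_, _, ⟨b, hb, rfl⟩, ⟨bs, hbs, rfl⟩, rfl⟩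
      exact ⟨b :: bs, ⟨b, bs, hb, hbs, rfl⟩, rfl⟩

end ListLemmas

namespace RTree

variable {α β : Type}

theorem induction {P : RTree α → Prop}
    (h : ∀ a ts, (∀ c ∈ ts, P c) → P (node a ts)) : ∀ u, P u
  | node a ts => h a ts fun c _ => induction h c
decreasing_by
  have := List.sizeOf_lt_of_mem ‹c ∈ ts›
  simp only [node.sizeOf_spec]
  omega

theorem forest_induction {P : List (RTree α) → Prop}
    (h : ∀ ss, (∀ a ss', node a ss' ∈ ss → P ss') → P ss) (ss : List (RTree α)) : P ss :=
  h ss fun a ss' _ => forest_induction h ss'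
termination_by sizeOf ss
decreasing_by
  have := List.sizeOf_lt_of_mem ‹node a ss' ∈ ss›
  simp only [node.sizeOf_spec] at this
  omega

theorem map_node (f : α → β) (a : α) (ts : List (RTree α)) :
    (node a ts).map f = node (f a) (ts.map (RTree.map f)) := by
  rw [RTree.map]
  simp

theorem Subtree.trans {u v w : RTree α} (h₁ : Subtree u v) (h₂ : Subtree v w) :
    Subtree u w := by
  induction h₂ with
  | refl => exact h₁
  | step hmem _ ih => exact Subtree.step hmem ih

theorem Subtree.of_mem_children {c w : RTree α} (h : c ∈ w.children) : Subtree c w := by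
  obtain ⟨a, ts⟩ := w
  exact Subtree.step h (Subtree.refl c)

theorem Subtree.wf {rk : α → ℕ} {u t : RTree α} (h : Subtree u t) (ht : t.Wf rk) :
    u.Wf rk := by
  induction h with
  | refl => exact ht
  | step hmem _ ih => cases ht with
    | node _ hts => exact ih (hts _ hmem)

theorem Subtree.length_children {rk : α → ℕ} {w t : RTree α} (h : Subtree w t)
    (ht : t.Wf rk) : w.children.length = rk w.label := by
  obtain ⟨a, ts⟩ := w
  cases h.wf ht with
  | node hlen _ => exact hlen

end RTree

section Substitution

variable {Γ Δ Q : Type}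

theorem substX_node (ss : List (RTree Γ)) (l : RLab Δ Q) (rs : List (Rhs Δ Q)) :
    substX ss (.node l rs) = .node (l.subst ss) (rs.map (substX ss)) :=
  RTree.map_node _ _ _

theorem RLab.subst_call {ss : List (RTree Γ)} {q : Q} {x : ℕ} (h : x < ss.length) :
    RLab.subst (Δ := Δ) ss (.call q x) = .call q ss[x] := by
  simp [RLab.subst, List.getElem?_eq_getElem h]

theorem substY_param (θ : List (OT Δ)) (i : ℕ) (us : List (OT Δ)) :
    substY θ (.node (.param i) us) = θ.getD i (.node (.param i) []) := by
  rw [substY]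

theorem substY_out (θ : List (OT Δ)) (d : Δ) (us : List (OT Δ)) :
    substY θ (.node (.out d) us) = .node (.out d) (us.map (substY θ)) := by
  rw [substY]
  simp

/-- Parameters beyond `ts` survive the inner substitution, so the outer one must still reach
them: hence the tail `θ.drop ts.length`. -/
theorem substY_substY (θ ts : List (OT Δ)) (u : OT Δ) :
    substY θ (substY ts u) = substY (ts.map (substY θ) ++ θ.drop ts.length) u := by
  induction u using RTree.induction with
  | h l us ih =>
    cases l with
    | param i =>
      simp only [substY_param]
      by_cases hi : i < ts.length
      · rw [List.getD_eq_getElem _ _ hi,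
          List.getD_eq_getElem _ _ (by simp only [List.length_append, List.length_map]; omega),
          List.getElem_append_left (by simpa using hi), List.getElem_map]
      · simp only [List.getD_eq_getElem?_getD, List.getElem?_eq_none (Nat.le_of_not_lt hi),
          Option.getD_none, substY_param]
        rw [List.getElem?_append_right (by simpa using Nat.le_of_not_lt hi), List.getElem?_drop,
          List.length_map, Nat.add_sub_cancel' (Nat.le_of_not_lt hi)]
    | out d =>
      simp only [substY_out, List.map_map]
      exact congrArg _ (List.map_congr_left ih)

theorem embed_node (a : Δ) (ts : List (RTree Δ)) :
    embed (.node a ts) = .node (.out a) (ts.map embed) :=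
  RTree.map_node _ _ _

theorem embed_eq_out_iff {w : RTree Δ} {d : Δ} {xs : List (OT Δ)} :
    embed w = .node (.out d) xs ↔ ∃ cs, w = .node d cs ∧ cs.map embed = xs := by
  obtain ⟨a, ts⟩ := w
  simp [embed_node, eq_comm]

theorem embed_injective : Function.Injective (embed (Δ := Δ)) := by
  intro u
  induction u using RTree.induction with
  | h a ts ih =>
    intro w hw
    obtain ⟨cs, rfl, hcs⟩ := embed_eq_out_iff.1 (hw.symm.trans (embed_node a ts))
    rw [eq_comm, map_eq_map_iff_forall₂,
      forall₂_congr_of_mem fun u hu c => ⟨@ih u hu c, congrArg _⟩, List.forall₂_eq_eq_eq] at hcs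
    rw [hcs]

end Substitution

section Rho

variable {Δ : Type}

open Classical in
/-- `ρ` extended to trees over `Δ ∪ Y`: a tree containing a parameter is never a subtree of
`t`, so it is sent to `⊥`. -/
noncomputable def rhoOT (t : RTree Δ) (u : OT Δ) : V Δ :=
  if h : ∃ w, RTree.Subtree w t ∧ embed w = u then some h.choose else none

theorem rhoOT_eq_some_iff {t w : RTree Δ} {u : OT Δ} :
    rhoOT t u = some w ↔ RTree.Subtree w t ∧ embed w = u := by
  unfold rhoOT
  split_ifs with h
  · rw [Option.some_inj]
    constructor
    · rintro rfl
      exact h.choose_spec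
    · rintro ⟨-, hw⟩
      exact embed_injective (h.choose_spec.2.trans hw.symm)
  · simpa using fun hw => h ⟨w, hw⟩

theorem rhoOT_embed {t w : RTree Δ} (h : RTree.Subtree w t) : rhoOT t (embed w) = some w :=
  rhoOT_eq_some_iff.2 ⟨h, rfl⟩

theorem rhoOT_comp_embed (t : RTree Δ) : rhoOT t ∘ embed = rhoFun t := by
  funext w
  by_cases h : RTree.Subtree w t
  · simp [rhoFun, h, rhoOT_embed h]
  · simp only [Function.comp_apply, rhoFun, h, if_false, Option.eq_none_iff_forall_ne_some,
      ne_eq, rhoOT_eq_some_iff, not_and]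
    rintro w' hw' hww'
    exact h (embed_injective hww' ▸ hw')

theorem rhoRel_iff {t : RTree Δ} {u : OT Δ} {v : V Δ} : rhoRel t u v ↔ rhoOT t u = v := by
  cases v with
  | some w => exact rhoOT_eq_some_iff.symm
  | none =>
    simp only [rhoRel, Option.eq_none_iff_forall_ne_some, ne_eq, rhoOT_eq_some_iff, not_exists]

theorem inV_rhoOT (t : RTree Δ) (u : OT Δ) : InV t (rhoOT t u) := by
  cases h : rhoOT t u with
  | none => trivial
  | some w => exact (rhoOT_eq_some_iff.1 h).1

theorem map_some_eq_map_rhoOT_iff {t : RTree Δ} {cs : List (RTree Δ)} {xs : List (OT Δ)}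
    (hcs : ∀ c ∈ cs, RTree.Subtree c t) : cs.map some = xs.map (rhoOT t) ↔ cs.map embed = xs := by
  rw [map_eq_map_iff_forall₂, ← List.forall₂_eq_eq_eq, List.forall₂_map_left_iff]
  exact forall₂_congr_of_mem fun c hc x =>
    eq_comm.trans (rhoOT_eq_some_iff.trans (and_iff_right (hcs c hc)))

open Classical in
/-- The value of `ρ` at an output node `d(x_1, …, x_l)`, as a function of `ρ(x_1), …, ρ(x_l)`. -/
noncomputable def rhoNode (t : RTree Δ) (d : Δ) (cs : List (V Δ)) : V Δ :=
  if h : ∃ w, RTree.Subtree w t ∧ w.label = d ∧ w.children.map some = cs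
  then some h.choose else none

theorem rhoNode_eq_some_iff {t w : RTree Δ} {d : Δ} {cs : List (V Δ)} :
    rhoNode t d cs = some w ↔ RTree.Subtree w t ∧ w.label = d ∧ w.children.map some = cs := by
  have unique : ∀ w₁ w₂ : RTree Δ, w₁.label = d → w₁.children.map some = cs →
      w₂.label = d → w₂.children.map some = cs → w₁ = w₂ := by
    rintro ⟨a₁, ts₁⟩ ⟨a₂, ts₂⟩ hl₁ hc₁ hl₂ hc₂
    simp only [RTree.label, RTree.children] at hl₁ hc₁ hl₂ hc₂
    rw [hl₁, hl₂, List.map_injective_iff.2 (Option.some_injective _) (hc₁.trans hc₂.symm)]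
  unfold rhoNode
  split_ifs with h
  · rw [Option.some_inj]
    constructor
    · rintro rfl
      exact h.choose_spec
    · rintro ⟨-, hl, hc⟩
      exact unique _ _ h.choose_spec.2.1 h.choose_spec.2.2 hl hc
  · simpa using fun hw hl hc => h ⟨w, hw, hl, hc⟩

theorem rhoNode_eq_none_iff {t : RTree Δ} {d : Δ} {cs : List (V Δ)} :
    rhoNode t d cs = none ↔
      ¬ ∃ w, RTree.Subtree w t ∧ w.label = d ∧ w.children.map some = cs := by
  simp only [Option.eq_none_iff_forall_ne_some, ne_eq, rhoNode_eq_some_iff, not_exists]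

theorem rhoOT_out (t : RTree Δ) (d : Δ) (xs : List (OT Δ)) :
    rhoOT t (.node (.out d) xs) = rhoNode t d (xs.map (rhoOT t)) := by
  refine Option.ext fun w => ?_
  rw [rhoOT_eq_some_iff, rhoNode_eq_some_iff, embed_eq_out_iff]
  constructor
  · rintro ⟨hw, cs, rfl, rfl⟩
    exact ⟨hw, rfl, (map_some_eq_map_rhoOT_iff fun c hc =>
      (RTree.Subtree.of_mem_children hc).trans hw).2 rfl⟩
  · rintro ⟨hw, rfl, hcs⟩
    obtain ⟨a, cs⟩ := w
    exact ⟨hw, cs, rfl, (map_some_eq_map_rhoOT_iff fun c hc =>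
      (RTree.Subtree.of_mem_children hc).trans hw).1 hcs⟩

end Rho

section Inversion

variable {Γ Δ Q : Type} {rsel : Q → Γ → List (RTree Γ) → Set (Rhs Δ Q)}

theorem semIO_param_iff {i : ℕ} {t' : OT Δ} :
    SemIO rsel (.node (.param i) []) t' ↔ t' = .node (.param i) [] :=
  ⟨fun h => by cases h; rfl, fun h => h ▸ SemIO.param i⟩

theorem semIO_out_iff {d : Δ} {us : List (ST Γ Δ Q)} {t' : OT Δ} :
    SemIO rsel (.node (.out d) us) t' ↔
      ∃ ts, List.Forall₂ (SemIO rsel) us ts ∧ t' = .node (.out d) ts := by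
  constructor
  · intro h
    cases h with
    | out hlen h => exact ⟨_, (forall₂_iff_forall_fin hlen).2 h, rfl⟩
  · rintro ⟨ts, hts, rfl⟩
    have hlen := hts.length_eq.symm
    exact SemIO.out hlen ((forall₂_iff_forall_fin hlen).1 hts)

theorem semIO_call_iff {q : Q} {σ : Γ} {ss : List (RTree Γ)} {us : List (ST Γ Δ Q)}
    {t' : OT Δ} :
    SemIO rsel (.node (.call q (.node σ ss)) us) t' ↔
      ∃ r ∈ rsel q σ ss, ∃ t₀, SemIO rsel (substX ss r) t₀ ∧
        ∃ ts, List.Forall₂ (SemIO rsel) us ts ∧ t' = substY ts t₀ := by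
  constructor
  · intro h
    cases h with
    | call hr h₀ hlen h => exact ⟨_, hr, _, h₀, _, (forall₂_iff_forall_fin hlen).2 h, rfl⟩
  · rintro ⟨r, hr, t₀, h₀, ts, hts, rfl⟩
    have hlen := hts.length_eq.symm
    exact SemIO.call hr h₀ hlen ((forall₂_iff_forall_fin hlen).1 hts)

variable {t : RTree Δ} {vs : List (V Δ)} {aenv : List (Set (Trip Δ Q))} {v : V Δ}

theorem fpred_param_iff {i : ℕ} :
    FPred t vs aenv (.node (.param i) []) v ↔ vs[i]? = some v :=
  ⟨fun h => by cases h with | param h => exact h, FPred.param⟩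

theorem fpred_call_iff {q : Q} {x : ℕ} {rs : List (Rhs Δ Q)} :
    FPred t vs aenv (.node (.call q x) rs) v ↔
      ∃ cs, List.Forall₂ (FPred t vs aenv) rs cs ∧ (q, cs, v) ∈ aenv.getD x ∅ := by
  constructor
  · intro h
    cases h with
    | call cs hlen ha h => exact ⟨cs, (forall₂_iff_forall_fin hlen).2 h, ha⟩
  · rintro ⟨cs, hcs, ha⟩
    have hlen := hcs.length_eq.symm
    exact FPred.call cs hlen ha ((forall₂_iff_forall_fin hlen).1 hcs)

/-- Well-formedness of `t` matters here: `f` only inspects the first `rs.length` children of a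
subtree of `t` with root label `d`. -/
theorem fpred_out_iff {rk : Δ → ℕ} (ht : t.Wf rk) {d : Δ} {rs : List (Rhs Δ Q)}
    (hrs : rs.length = rk d) :
    FPred t vs aenv (.node (.out d) rs) v ↔
      ∃ cs, List.Forall₂ (FPred t vs aenv) rs cs ∧ (∀ c ∈ cs, InV t c) ∧ rhoNode t d cs = v := by
  have length_children {w : RTree Δ} (hw : RTree.Subtree w t) (hl : w.label = d) :
      w.children.length = rs.length := by
    rw [hw.length_children ht, hl, hrs]
  have children_eq {w : RTree Δ} (hw : RTree.Subtree w t) (hl : w.label = d)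
      {cs : List (V Δ)} (hcs : cs.length = rs.length) :
      w.children.map some = cs ↔
        ∀ i : Fin rs.length, w.children[i.val]? = cs.get (i.cast hcs.symm) := by
    rw [List.ext_get_iff]
    simp [length_children hw hl, hcs, Fin.forall_iff]
  constructor
  · intro h
    cases h with
    | @outSome _ _ w hw hl h =>
      have hlen := length_children hw hl
      refine ⟨_, ?_, ?_, rhoNode_eq_some_iff.2 ⟨hw, hl, rfl⟩⟩
      · refine (forall₂_iff_forall_fin (by simp [hlen])).2 fun i => ?_
        have hi : i.val < w.children.length := hlen.symm ▸ i.isLt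
        simpa [List.getElem?_eq_getElem hi] using h i
      · simp only [List.mem_map]
        rintro _ ⟨c, hc, rfl⟩
        exact (RTree.Subtree.of_mem_children hc).trans hw
    | outNone cs hlen hcs h hno =>
      refine ⟨cs, (forall₂_iff_forall_fin hlen).2 h, hcs, rhoNode_eq_none_iff.2 ?_⟩
      rintro ⟨w, hw, hl, hch⟩
      exact hno ⟨w, hw, hl, (children_eq hw hl hlen).1 hch⟩
  · rintro ⟨cs, hrc, hcs, rfl⟩
    have hlen := hrc.length_eq.symm
    cases h : rhoNode t d cs with
    | some w =>
      obtain ⟨hw, hl, hch⟩ := rhoNode_eq_some_iff.1 h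
      refine FPred.outSome hw hl fun i => ?_
      rw [(children_eq hw hl hlen).1 hch i]
      exact (forall₂_iff_forall_fin hlen).1 hrc i
    | none =>
      refine FPred.outNone cs hlen hcs ((forall₂_iff_forall_fin hlen).1 hrc) ?_
      rintro ⟨w, hw, hl, hch⟩
      exact rhoNode_eq_none_iff.1 h ⟨w, hw, hl, (children_eq hw hl hlen).2 hch⟩

theorem mem_runIO_node_iff {rankQ : Q → ℕ} {σ : Γ} {ss : List (RTree Γ)} {q : Q}
    {cs : List (V Δ)} :
    (q, cs, v) ∈ runIO rankQ rsel t (.node σ ss) ↔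
      cs.length = rankQ q ∧ (∀ c ∈ cs, InV t c) ∧ InV t v ∧
        ∃ r ∈ rsel q σ ss, FPred t cs (ss.map (runIO rankQ rsel t)) r v := by
  rw [runIO]
  simp

end Inversion

section RhoSemantics

variable {Γ Δ Q : Type} {rsel : Q → Γ → List (RTree Γ) → Set (Rhs Δ Q)} {t : RTree Δ}
  {θ : List (OT Δ)}

/-- `{ρ(t'[y⃗/θ]) | t' ∈ ⟦u⟧_IO}`. -/
def rhoSemIO (rsel : Q → Γ → List (RTree Γ) → Set (Rhs Δ Q)) (t : RTree Δ) (θ : List (OT Δ))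
    (u : ST Γ Δ Q) : Set (V Δ) :=
  (rhoOT t ∘ substY θ) '' {t' | SemIO rsel u t'}

theorem inV_of_mem_rhoSemIO {u : ST Γ Δ Q} {v : V Δ} (h : v ∈ rhoSemIO rsel t θ u) :
    InV t v := by
  obtain ⟨t', -, rfl⟩ := h
  exact inV_rhoOT t _

theorem inV_of_forall₂_mem_rhoSemIO {us : List (ST Γ Δ Q)} {cs : List (V Δ)}
    (h : List.Forall₂ (fun u c => c ∈ rhoSemIO rsel t θ u) us cs) : ∀ c ∈ cs, InV t c := by
  induction h with
  | nil => simp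
  | cons hc _ ih => simpa [inV_of_mem_rhoSemIO hc] using ih

theorem mem_rhoSemIO_param_iff {i : ℕ} (hi : i < θ.length) {v : V Δ} :
    v ∈ rhoSemIO rsel t θ (.node (.param i) []) ↔ rhoOT t θ[i] = v := by
  simp [rhoSemIO, semIO_param_iff, substY_param, List.getElem?_eq_getElem hi, eq_comm]

theorem mem_rhoSemIO_out_iff {d : Δ} {us : List (ST Γ Δ Q)} {v : V Δ} :
    v ∈ rhoSemIO rsel t θ (.node (.out d) us) ↔
      ∃ cs, List.Forall₂ (fun u c => c ∈ rhoSemIO rsel t θ u) us cs ∧ rhoNode t d cs = v := by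
  simp only [rhoSemIO, Set.mem_image, Set.mem_ofPred_eq, semIO_out_iff,
    ← exists_forall₂_map_eq_iff]
  constructor
  · rintro ⟨_, ⟨ts, hts, rfl⟩, rfl⟩
    exact ⟨_, ⟨ts, hts, rfl⟩, by simp [substY_out, rhoOT_out]⟩
  · rintro ⟨_, ⟨ts, hts, rfl⟩, rfl⟩
    exact ⟨_, ⟨ts, hts, rfl⟩, by simp [substY_out, rhoOT_out]⟩

theorem mem_rhoSemIO_call_iff {q : Q} {σ : Γ} {ss : List (RTree Γ)} {us : List (ST Γ Δ Q)}
    {P : Rhs Δ Q → List (V Δ) → V Δ → Prop}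
    (hP : ∀ r ∈ rsel q σ ss, ∀ θ' : List (OT Δ), us.length ≤ θ'.length →
      rhoSemIO rsel t θ' (substX ss r) = {v | P r ((θ'.map (rhoOT t)).take us.length) v})
    {v : V Δ} :
    v ∈ rhoSemIO rsel t θ (.node (.call q (.node σ ss)) us) ↔
      ∃ cs, List.Forall₂ (fun u c => c ∈ rhoSemIO rsel t θ u) us cs ∧
        ∃ r ∈ rsel q σ ss, P r cs v := by
  have body : ∀ r ∈ rsel q σ ss, ∀ ts, List.Forall₂ (SemIO rsel) us ts →
      ((∃ t₀, SemIO rsel (substX ss r) t₀ ∧ rhoOT t (substY θ (substY ts t₀)) = v) ↔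
        P r (ts.map (rhoOT t ∘ substY θ)) v) := by
    intro r hr ts hts
    have hlen := hts.length_eq
    have := Set.ext_iff.1 (hP r hr (ts.map (substY θ) ++ θ.drop ts.length) (by simp [hlen])) v
    simp only [rhoSemIO, Set.mem_image, Set.mem_ofPred_eq, Function.comp_apply] at this
    rw [List.map_append, List.take_left' (by simp [hlen]), List.map_map] at this
    simpa only [substY_substY] using this
  simp only [rhoSemIO, Set.mem_image, Set.mem_ofPred_eq, semIO_call_iff,
    ← exists_forall₂_map_eq_iff]
  constructor
  · rintro ⟨_, ⟨r, hr, t₀, h₀, ts, hts, rfl⟩, rfl⟩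
    exact ⟨_, ⟨ts, hts, rfl⟩, r, hr, (body r hr ts hts).1 ⟨t₀, h₀, rfl⟩⟩
  · rintro ⟨_, ⟨ts, hts, rfl⟩, r, hr, hPr⟩
    obtain ⟨t₀, h₀, rfl⟩ := (body r hr ts hts).2 hPr
    exact ⟨_, ⟨r, hr, t₀, h₀, ts, hts, rfl⟩, rfl⟩

theorem forall₂_mem_rhoSemIO_iff {ss : List (RTree Γ)} {vs : List (V Δ)}
    {aenv : List (Set (Trip Δ Q))} {rs : List (Rhs Δ Q)}
    (ih : ∀ r ∈ rs, rhoSemIO rsel t θ (substX ss r) = {v | FPred t vs aenv r v})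
    (cs : List (V Δ)) :
    List.Forall₂ (fun u c => c ∈ rhoSemIO rsel t θ u) (rs.map (substX ss)) cs ↔
      List.Forall₂ (FPred t vs aenv) rs cs := by
  rw [List.forall₂_map_left_iff]
  exact forall₂_congr_of_mem fun r hr c => Set.ext_iff.1 (ih r hr) c

theorem rhoSemIO_substX_out {rk : Δ → ℕ} (ht : t.Wf rk) {ss : List (RTree Γ)}
    {vs : List (V Δ)} {aenv : List (Set (Trip Δ Q))} {d : Δ} {rs : List (Rhs Δ Q)}
    (hlen : rs.length = rk d)
    (ih : ∀ r ∈ rs, rhoSemIO rsel t θ (substX ss r) = {v | FPred t vs aenv r v}) :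
    rhoSemIO rsel t θ (substX ss (.node (.out d) rs)) =
      {v | FPred t vs aenv (.node (.out d) rs) v} := by
  ext v
  rw [substX_node, Set.mem_ofPred_eq, fpred_out_iff ht hlen, RLab.subst, mem_rhoSemIO_out_iff]
  constructor
  · rintro ⟨cs, hcs, rfl⟩
    exact ⟨cs, (forall₂_mem_rhoSemIO_iff ih cs).1 hcs, inV_of_forall₂_mem_rhoSemIO hcs, rfl⟩
  · rintro ⟨cs, hcs, -, rfl⟩
    exact ⟨cs, (forall₂_mem_rhoSemIO_iff ih cs).2 hcs, rfl⟩

theorem rhoSemIO_substX_call {rankQ : Q → ℕ} {ss ss' : List (RTree Γ)} {vs : List (V Δ)}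
    {q : Q} {x : ℕ} {σ : Γ} {rs : List (Rhs Δ Q)} (hx : x < ss.length)
    (hsx : ss[x] = .node σ ss') (hlen : rs.length = rankQ q)
    (hbody : ∀ r ∈ rsel q σ ss', ∀ θ' : List (OT Δ), rs.length ≤ θ'.length →
      rhoSemIO rsel t θ' (substX ss' r) =
        {v | FPred t ((θ'.map (rhoOT t)).take rs.length) (ss'.map (runIO rankQ rsel t)) r v})
    (ih : ∀ r ∈ rs, rhoSemIO rsel t θ (substX ss r) =
      {v | FPred t vs (ss.map (runIO rankQ rsel t)) r v}) :
    rhoSemIO rsel t θ (substX ss (.node (.call q x) rs)) =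
      {v | FPred t vs (ss.map (runIO rankQ rsel t)) (.node (.call q x) rs) v} := by
  have hrun : (ss.map (runIO rankQ rsel t)).getD x ∅ = runIO rankQ rsel t (.node σ ss') := by
    rw [List.getD_eq_getElem _ _ (by simpa using hx), List.getElem_map, hsx]
  ext v
  rw [substX_node, RLab.subst_call hx, hsx, Set.mem_ofPred_eq, fpred_call_iff, hrun]
  simp only [mem_runIO_node_iff]
  have call_iff := mem_rhoSemIO_call_iff (θ := θ) (v := v) (us := rs.map (substX ss))
    (P := fun r cs v => FPred t cs (ss'.map (runIO rankQ rsel t)) r v)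
    (by simpa only [List.length_map] using hbody)
  constructor
  · intro h
    obtain ⟨cs, hcs, r, hr, hf⟩ := call_iff.1 h
    have hcs' := (forall₂_mem_rhoSemIO_iff ih cs).1 hcs
    exact ⟨cs, hcs', hcs'.length_eq.symm.trans hlen, inV_of_forall₂_mem_rhoSemIO hcs,
      inV_of_mem_rhoSemIO h, r, hr, hf⟩
  · rintro ⟨cs, hcs, -, -, -, r, hr, hf⟩
    exact call_iff.2 ⟨cs, (forall₂_mem_rhoSemIO_iff ih cs).2 hcs, r, hr, hf⟩

end RhoSemantics

/-- `θ` may contain parameters: in the call case the arguments' results, which still contain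
the caller's parameters, become the parameter assignment of the rule body. -/
theorem rhoSemIO_substX_eq {Γ Δ Q : Type} (M : MTT Γ Δ Q) {t : RTree Δ}
    (ht : t.Wf M.rankΔ) (ss : List (RTree Γ)) (hss : ∀ s ∈ ss, s.Wf M.rankΓ) {n : ℕ}
    {r : Rhs Δ Q} (hr : RhsWf M.rankΔ M.rankQ ss.length n r) {θ : List (OT Δ)}
    (hθ : n ≤ θ.length) :
    rhoSemIO M.sel t θ (substX ss r) =
      {v | FPred t ((θ.map (rhoOT t)).take n) (ss.map (runIO M.rankQ M.sel t)) r v} := by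
  induction ss using RTree.forest_induction generalizing n r θ with
  | h ss ihss =>
  induction hr with
  | @param i hi =>
    ext v
    rw [substX_node, Set.mem_ofPred_eq, fpred_param_iff]
    simp [RLab.subst, mem_rhoSemIO_param_iff (hi.trans_le hθ), hi,
      List.getElem?_eq_getElem (hi.trans_le hθ)]
  | out hlen _ ih => exact rhoSemIO_substX_out ht hlen ih
  | @call q x rs hx hlen _ ih =>
    rcases hsx : ss[x] with ⟨σ, ss'⟩
    have hmem : RTree.node σ ss' ∈ ss := hsx ▸ List.getElem_mem hx
    obtain ⟨hlen', hss'⟩ : ss'.length = M.rankΓ σ ∧ ∀ s ∈ ss', s.Wf M.rankΓ := by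
      cases hss _ hmem with
      | node h₁ h₂ => exact ⟨h₁, h₂⟩
    refine rhoSemIO_substX_call hx hsx hlen (fun r' hr' θ' hθ' => ?_) ih
    rw [hlen] at hθ' ⊢
    exact ihss σ ss' hmem hss' (hlen' ▸ M.rules_wf q σ r' hr') hθ'

/-- the inner claim for the inverse-type construction for IO-mtts.
For `a⃗ = (run(s_1),…,run(s_k))`, every right-hand-side tree `r` over
`Δ ∪ (Q × {x_1,…,x_k}) ∪ {y_1,…,y_n}`, all `t_1,…,t_n ∈ T_Δ`, and
`v⃗ = (ρ(t_1),…,ρ(t_n))`: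
`{ρ(t'[y⃗/t⃗]) | t' ∈ ⟦r[x⃗/s⃗]⟧_IO} = {v' | f_{v⃗,a⃗}(r, v')}`. -/
theorem fpred_claim {Γ Δ Q : Type} [Fintype Γ] [Fintype Δ] [Fintype Q]
    (M : MTT Γ Δ Q) (t : RTree Δ) (ht : t.Wf M.rankΔ)
    (k n : ℕ) (ss : List (RTree Γ)) (hk : ss.length = k)
    (hss : ∀ s ∈ ss, s.Wf M.rankΓ)
    (r : Rhs Δ Q) (hr : RhsWf M.rankΔ M.rankQ k n r)
    (tsub : List (RTree Δ)) (hn : tsub.length = n)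
    (htsub : ∀ w ∈ tsub, w.Wf M.rankΔ) :
    {v | ∃ t' : OT Δ, SemIO M.sel (substX ss r) t' ∧
        rhoRel t (substY (tsub.map embed) t') v} =
      {v | FPred t (tsub.map (rhoFun t)) (ss.map (runIO M.rankQ M.sel t)) r v} := by
  subst hk hn
  have key := rhoSemIO_substX_eq M ht ss hss hr (θ := tsub.map embed) (by simp)
  rw [List.map_map, rhoOT_comp_embed, List.take_of_length_le (by simp)] at key
  rw [← key]
  ext v
  simp [rhoSemIO, rhoRel_iff]

end MttF
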